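/- arXiv:2510.20552 — 2 statements merged into one kernel-verified Lean document; each statement's English description precedes it below -/
import Mathlib

section
/- Let D be a symmetric positive definite d×d matrix with smallest eigenvalue at least α > 0, and let σ = D^{1/2} be its principal (symmetric positive definite) square root. If X is the unique symmetric matrix solving σX + Xσ = D' for a symmetric matrix D', then every entry of X satisfies |X_{ij}| ≤ (d²/(2√α)) · max_{m,n} |D'_{mn}|. -/
/-!
Diagonalize `σ = U Λ Uᵀ` with `U` orthogonal. Conjugating by `U` turns `σX + Xσ = D'` into
`ΛR + RΛ = H` with `R = UᵀXU`, `H = UᵀD'U`, so `R k l = H k l / (λ_k + λ_l)`; and `λ_k ≥ √α`,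
by testing the lower bound on `D = σ²` against a unit eigenvector. A row or column of an
orthogonal matrix has Euclidean norm one, hence absolute sum at most `√d`, so conjugation by `U`
multiplies the entrywise sup norm by at most `d`. Applying this to `H` and then to `X = URUᵀ`
gives `d²/(2√α)`.
-/

open Matrix Finset Unitary

theorem Finset.sum_abs_le_sqrt_card {ι : Type*} [Fintype ι] (f : ι → ℝ)
    (hf : ∑ i, f i ^ 2 = 1) : ∑ i, |f i| ≤ √(Fintype.card ι) := by
  have hsq : (∑ i, |f i|) ^ 2 ≤ Fintype.card ι := by
    simpa [sq_abs, hf] using sq_sum_le_card_mul_sum_sq (s := univ) (f := fun i => |f i|)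
  exact Real.le_sqrt_of_sq_le hsq

namespace Matrix

theorem abs_mul_mul_apply_le {l m n p : Type*} [Fintype m] [Fintype n] {c : ℝ}
    (A : Matrix l m ℝ) (B : Matrix m n ℝ) (C : Matrix n p ℝ) (hB : ∀ k l, |B k l| ≤ c)
    (i : l) (j : p) :
    |(A * B * C) i j| ≤ (∑ k, |A i k|) * c * ∑ l, |C l j| := by
  calc |(A * B * C) i j| = |∑ l, ∑ k, A i k * B k l * C l j| := by
        simp only [mul_apply, Finset.sum_mul]
    _ ≤ ∑ l, ∑ k, |A i k| * c * |C l j| := by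
        refine (abs_sum_le_sum_abs _ _).trans (sum_le_sum fun l _ => ?_)
        refine (abs_sum_le_sum_abs _ _).trans (sum_le_sum fun k _ => ?_)
        rw [abs_mul, abs_mul]
        gcongr
        exact hB k l
    _ = (∑ k, |A i k|) * c * ∑ l, |C l j| := by
        rw [mul_sum]; simp only [sum_mul]

variable {n : Type*} [Fintype n] [DecidableEq n]

theorem sum_sq_apply_eq_one_of_mem_unitaryGroup {U : Matrix n n ℝ} (hU : U ∈ unitaryGroup n ℝ)
    (i : n) : ∑ k, U i k ^ 2 = 1 := by
  simpa [mul_apply, one_apply, sq] using congrFun₂ (mem_unitaryGroup_iff.mp hU) i i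

theorem abs_conjStarAlgAut_apply_le {c : ℝ} (U : unitaryGroup n ℝ) (B : Matrix n n ℝ)
    (hB : ∀ k l, |B k l| ≤ c) (i j : n) :
    |conjStarAlgAut ℝ _ U B i j| ≤ Fintype.card n * c := by
  have hc : 0 ≤ c := (abs_nonneg _).trans (hB i j)
  have hrow := fun k => sum_abs_le_sqrt_card _ (sum_sq_apply_eq_one_of_mem_unitaryGroup U.2 k)
  have hcol : ∑ l, |(star (U : Matrix n n ℝ)) l j| ≤ √(Fintype.card n) := by
    simpa using hrow j
  calc |conjStarAlgAut ℝ _ U B i j|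
        ≤ (∑ k, |(U : Matrix n n ℝ) i k|) * c * ∑ l, |(star (U : Matrix n n ℝ)) l j| :=
        abs_mul_mul_apply_le _ _ _ hB i j
    _ ≤ √(Fintype.card n) * c * √(Fintype.card n) := by gcongr; exact hrow i
    _ = Fintype.card n * c := by
        rw [mul_right_comm, Real.mul_self_sqrt (Nat.cast_nonneg _)]

theorem PosSemidef.sqrt_le_eigenvalues {σ : Matrix n n ℝ} (hσ : σ.PosSemidef) {α : ℝ}
    (h : ∀ ξ : n → ℝ, α * (ξ ⬝ᵥ ξ) ≤ ξ ⬝ᵥ (σ * σ) *ᵥ ξ) (k : n) :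
    √α ≤ hσ.1.eigenvalues k := by
  set v : n → ℝ := ⇑(hσ.1.eigenvectorBasis k)
  have hv : σ *ᵥ v = hσ.1.eigenvalues k • v := hσ.1.mulVec_eigenvectorBasis k
  have hvv : v ⬝ᵥ v = 1 := by
    simpa [mul_apply, one_apply, dotProduct, v] using
      congrFun₂ (mem_unitaryGroup_iff'.mp hσ.1.eigenvectorUnitary.2) k k
  have hα : α ≤ hσ.1.eigenvalues k ^ 2 := by
    simpa [← mulVec_mulVec, hv, mulVec_smul, hvv, sq, mul_assoc] using h v
  simpa [Real.sqrt_sq (hσ.eigenvalues_nonneg k)] using Real.sqrt_le_sqrt hα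

theorem diagonal_sylvester_apply {μ : n → ℝ} {R H : Matrix n n ℝ}
    (h : diagonal μ * R + R * diagonal μ = H) {k l : n} (hkl : μ k + μ l ≠ 0) :
    R k l = H k l / (μ k + μ l) := by
  rw [eq_div_iff hkl, ← h]
  simp only [add_apply, diagonal_mul, mul_diagonal]
  ring

end Matrix

theorem sylvester_solution_entry_bound_general
    (d : ℕ) (α : ℝ) (hα : 0 < α)
    (D σ D' X : Matrix (Fin d) (Fin d) ℝ)
    (hell : ∀ ξ : Fin d → ℝ, α * (ξ ⬝ᵥ ξ) ≤ ξ ⬝ᵥ D.mulVec ξ)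
    (hσpos : σ.PosDef) (hσsq : σ * σ = D)
    (hX : σ * X + X * σ = D')
    (M : ℝ) (hM : ∀ m n, |D' m n| ≤ M) :
    ∀ i j, |X i j| ≤ ((d : ℝ)^2 / (2 * Real.sqrt α)) * M := by
  subst hσsq
  have hσ := hσpos.posSemidef
  set U := hσ.1.eigenvectorUnitary
  set μ := hσ.1.eigenvalues
  set φ := conjStarAlgAut ℝ _ (star U)
  have hφσ : φ σ = diagonal μ := hσ.1.conjStarAlgAut_star_eigenvectorUnitary
  have hsylv : diagonal μ * φ X + φ X * diagonal μ = φ D' := by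
    rw [← hX, ← hφσ, map_add, map_mul, map_mul]
  have hR : ∀ k l, |φ X k l| ≤ d * M / (2 * √α) := by
    intro k l
    have hkl : 2 * √α ≤ μ k + μ l := by
      linarith [hσ.sqrt_le_eigenvalues hell k, hσ.sqrt_le_eigenvalues hell l]
    have hkl_pos : 0 < μ k + μ l := by linarith [Real.sqrt_pos.2 hα]
    have hφD' : |φ D' k l| ≤ d * M := by
      simpa only [Fintype.card_fin] using abs_conjStarAlgAut_apply_le (star U) D' hM k l
    have hM0 : 0 ≤ M := (abs_nonneg _).trans (hM k l)
    rw [diagonal_sylvester_apply hsylv hkl_pos.ne', abs_div, abs_of_pos hkl_pos]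
    exact div_le_div₀ (by positivity) hφD' (by positivity) hkl
  have hXφ : X = conjStarAlgAut ℝ _ U (φ X) := by
    rw [← conjStarAlgAut_mul_apply, mul_star_self, map_one]
    rfl
  intro i j
  calc |X i j| ≤ d * (d * M / (2 * √α)) := by
        simpa only [← hXφ, Fintype.card_fin] using abs_conjStarAlgAut_apply_le U _ hR i j
    _ = ((d : ℝ)^2 / (2 * Real.sqrt α)) * M := by ring

/-- Entrywise bound for the solution of the Sylvester equation `σX + Xσ = D'`,
where `σ = D^{1/2}` is the principal square root of a symmetric positive
definite matrix `D` whose smallest eigenvalue is at least `α > 0`. -/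
theorem sylvester_solution_entry_bound
    (d : ℕ) (α : ℝ) (hα : 0 < α)
    (D σ D' X : Matrix (Fin d) (Fin d) ℝ)
    (hDsymm : D.IsSymm) (hDpos : D.PosDef)
    (hell : ∀ ξ : Fin d → ℝ, α * (ξ ⬝ᵥ ξ) ≤ ξ ⬝ᵥ D.mulVec ξ)
    (hσsymm : σ.IsSymm) (hσpos : σ.PosDef) (hσsq : σ * σ = D)
    (hD'symm : D'.IsSymm) (hXsymm : X.IsSymm)
    (hX : σ * X + X * σ = D')
    (M : ℝ) (hM : ∀ m n, |D' m n| ≤ M) :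
    ∀ i j, |X i j| ≤ ((d : ℝ)^2 / (2 * Real.sqrt α)) * M :=
  sylvester_solution_entry_bound_general d α hα D σ D' X hell hσpos hσsq hX M hM
end

section
/- Let ε ≠ 0 be constant and a, b : ℝ → ℝ be C¹ with a(x₁) ≥ a₀ > 0, b(x₂) ≥ b₀ > 0, and a(x₁)b(x₂) − ε² ≥ δ > 0 for all (x₁,x₂) ∈ ℝ². Define σ(x) = [[a(x₁), ε],[ε, b(x₂)]] and D = σσᵀ. Then ∇·D − 2σ(∇·σᵀ) = −ε·(b'(x₂), a'(x₁)); in particular, if a' or b' is not identically zero, the identity ∇·D = 2σ∇·σᵀ fails at some point. -/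
/-!
By the product rule, `(∇·(σσᵀ))ᵢ = ∑ⱼₖ (∂ⱼσᵢₖ) σⱼₖ + (σ (∇·σᵀ))ᵢ`. For the cross-coupled `σ`
the only nonzero partials are `∂₁σ₁₁ = a'` and `∂₂σ₂₂ = b'`, so the first term is
`(a a', b b')` while `σ (∇·σᵀ) = (a a' + ε b', ε a' + b b')`; the defect
`(a a', b b') − σ (∇·σᵀ)` is therefore `−ε (b', a')`, and `ε ≠ 0` makes it nonzero wherever
`a'` or `b'` is.
-/

open Matrix Finset

section RowDivergence

variable {ι : Type*} [Fintype ι] [DecidableEq ι]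

noncomputable def rowDiv (M : (ι → ℝ) → Matrix ι ι ℝ) (x : ι → ℝ) (i : ι) : ℝ :=
  ∑ j, fderiv ℝ (fun y => M y i j) x (Pi.single j 1)

theorem fderiv_comp_apply_single {g : ℝ → ℝ} {x : ι → ℝ} {i : ι}
    (hg : DifferentiableAt ℝ g (x i)) (j : ι) :
    fderiv ℝ (fun y : ι → ℝ => g (y i)) x (Pi.single j 1) =
      (Pi.single i (deriv g (x i)) : ι → ℝ) j := by
  have h : HasFDerivAt (fun y : ι → ℝ => g (y i))
      (deriv g (x i) • ContinuousLinearMap.proj i) x :=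
    hg.hasDerivAt.comp_hasFDerivAt x
      (ContinuousLinearMap.proj (R := ℝ) (φ := fun _ : ι => ℝ) i).hasFDerivAt
  rw [h.fderiv]
  rcases eq_or_ne j i with rfl | hji
  · simp
  · simp [hji, hji.symm]

theorem rowDiv_mul_transpose {σ : (ι → ℝ) → Matrix ι ι ℝ} {x : ι → ℝ}
    (hσ : ∀ i k, DifferentiableAt ℝ (fun y => σ y i k) x) (i : ι) :
    rowDiv (fun y => σ y * (σ y)ᵀ) x i =
      ∑ j, ∑ k, fderiv ℝ (fun y => σ y i k) x (Pi.single j 1) * σ x j k +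
        (σ x *ᵥ rowDiv (fun y => (σ y)ᵀ) x) i := by
  have hentry : ∀ j, fderiv ℝ (fun y => (σ y * (σ y)ᵀ) i j) x (Pi.single j 1) =
      ∑ k, (fderiv ℝ (fun y => σ y i k) x (Pi.single j 1) * σ x j k +
        σ x i k * fderiv ℝ (fun y => σ y j k) x (Pi.single j 1)) := by
    intro j
    have hderiv : HasFDerivAt (fun y => ∑ k, σ y i k * σ y j k)
        (∑ k, (σ x i k • fderiv ℝ (fun y => σ y j k) x +
          σ x j k • fderiv ℝ (fun y => σ y i k) x)) x :=
      HasFDerivAt.fun_sum fun k _ => (hσ i k).hasFDerivAt.mul (hσ j k).hasFDerivAt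
    simp only [mul_apply, transpose_apply, hderiv.fderiv, FunLike.coe_sum, Finset.sum_apply,
      _root_.add_apply, _root_.smul_apply, smul_eq_mul]
    exact sum_congr rfl fun k _ => by ring
  simp only [rowDiv, hentry, sum_add_distrib, mulVec, dotProduct, transpose_apply, mul_sum]
  rw [sum_comm (f := fun j k => σ x i k * _)]

end RowDivergence

section CrossCoupled

variable {a b : ℝ → ℝ} {ε : ℝ} {x : Fin 2 → ℝ}

variable (a b ε) in
def crossCoupled (x : Fin 2 → ℝ) : Matrix (Fin 2) (Fin 2) ℝ :=
  !![a (x 0), ε; ε, b (x 1)]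

theorem differentiableAt_crossCoupled_apply (ha : DifferentiableAt ℝ a (x 0))
    (hb : DifferentiableAt ℝ b (x 1)) (i k : Fin 2) :
    DifferentiableAt ℝ (fun y => crossCoupled a b ε y i k) x := by
  fin_cases i <;> fin_cases k <;> simp [crossCoupled]
  exacts [ha.comp x (differentiableAt_apply _ x), hb.comp x (differentiableAt_apply _ x)]

theorem fderiv_crossCoupled_apply (ha : DifferentiableAt ℝ a (x 0))
    (hb : DifferentiableAt ℝ b (x 1)) (i k j : Fin 2) :
    fderiv ℝ (fun y => crossCoupled a b ε y i k) x (Pi.single j 1) =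
      if i = k ∧ k = j then ![deriv a (x 0), deriv b (x 1)] i else 0 := by
  fin_cases i <;> fin_cases k <;> fin_cases j <;>
    simp [crossCoupled, fderiv_comp_apply_single, ha, hb]

theorem rowDiv_crossCoupled_transpose (ha : DifferentiableAt ℝ a (x 0))
    (hb : DifferentiableAt ℝ b (x 1)) :
    rowDiv (fun y => (crossCoupled a b ε y)ᵀ) x = ![deriv a (x 0), deriv b (x 1)] := by
  ext l
  fin_cases l <;> simp [rowDiv, Fin.sum_univ_two, fderiv_crossCoupled_apply ha hb]

theorem rowDiv_crossCoupled_mul_transpose (ha : DifferentiableAt ℝ a (x 0))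
    (hb : DifferentiableAt ℝ b (x 1)) :
    rowDiv (fun y => crossCoupled a b ε y * (crossCoupled a b ε y)ᵀ) x =
      ![2 * a (x 0) * deriv a (x 0) + ε * deriv b (x 1),
        ε * deriv a (x 0) + 2 * b (x 1) * deriv b (x 1)] := by
  ext i
  rw [rowDiv_mul_transpose (differentiableAt_crossCoupled_apply ha hb),
    rowDiv_crossCoupled_transpose ha hb]
  simp only [Fin.sum_univ_two, fderiv_crossCoupled_apply ha hb]
  fin_cases i <;> simp [crossCoupled] <;> ring

theorem rowDiv_crossCoupled_sub_two_mul (ha : DifferentiableAt ℝ a (x 0))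
    (hb : DifferentiableAt ℝ b (x 1)) (i : Fin 2) :
    rowDiv (fun y => crossCoupled a b ε y * (crossCoupled a b ε y)ᵀ) x i -
        2 * (crossCoupled a b ε x *ᵥ rowDiv (fun y => (crossCoupled a b ε y)ᵀ) x) i =
      ![-ε * deriv b (x 1), -ε * deriv a (x 0)] i := by
  rw [rowDiv_crossCoupled_mul_transpose ha hb, rowDiv_crossCoupled_transpose ha hb]
  fin_cases i <;> simp [crossCoupled] <;> ring

end CrossCoupled

theorem structural_identity_fails_separable_general
    (ε : ℝ) (hε : ε ≠ 0)
    (a b : ℝ → ℝ) (ha : ContDiff ℝ 1 a) (hb : ContDiff ℝ 1 b)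
    (σ D : (Fin 2 → ℝ) → Matrix (Fin 2) (Fin 2) ℝ)
    (hσ : ∀ x, σ x = !![a (x 0), ε; ε, b (x 1)])
    (hD : ∀ x, D x = σ x * (σ x)ᵀ) :
    (∀ (x : Fin 2 → ℝ),
      (∑ j : Fin 2, fderiv ℝ (fun y => D y 0 j) x (Pi.single j 1))
          - 2 * (∑ l : Fin 2, σ x 0 l *
              (∑ j : Fin 2, fderiv ℝ (fun y => σ y j l) x (Pi.single j 1)))
        = -ε * deriv b (x 1) ∧
      (∑ j : Fin 2, fderiv ℝ (fun y => D y 1 j) x (Pi.single j 1))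
          - 2 * (∑ l : Fin 2, σ x 1 l *
              (∑ j : Fin 2, fderiv ℝ (fun y => σ y j l) x (Pi.single j 1)))
        = -ε * deriv a (x 0)) ∧
    ((∃ s, deriv a s ≠ 0) ∨ (∃ s, deriv b s ≠ 0) →
      ∃ (x : Fin 2 → ℝ) (i : Fin 2),
        (∑ j : Fin 2, fderiv ℝ (fun y => D y i j) x (Pi.single j 1))
          ≠ 2 * (∑ l : Fin 2, σ x i l *
              (∑ j : Fin 2, fderiv ℝ (fun y => σ y j l) x (Pi.single j 1)))) := by
  obtain rfl : σ = crossCoupled a b ε := funext hσ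
  obtain rfl : D = fun y => crossCoupled a b ε y * (crossCoupled a b ε y)ᵀ := funext hD
  have hdefect (x : Fin 2 → ℝ) := rowDiv_crossCoupled_sub_two_mul (ε := ε)
    (ha.differentiable one_ne_zero (x 0)) (hb.differentiable one_ne_zero (x 1))
  refine ⟨fun x => ⟨hdefect x 0, hdefect x 1⟩, ?_⟩
  rintro (⟨s, hs⟩ | ⟨s, hs⟩)
  · refine ⟨![s, 0], 1, sub_ne_zero.1 ?_⟩
    exact (hdefect _ 1).trans_ne (by simpa using mul_ne_zero hε hs)
  · refine ⟨![0, s], 0, sub_ne_zero.1 ?_⟩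
    exact (hdefect _ 0).trans_ne (by simpa using mul_ne_zero hε hs)

/-- Separable cross-coupled diffusion tensor: for
`σ(x) = [[a(x₁), ε],[ε, b(x₂)]]` and `D = σσᵀ`, the defect
`∇·D − 2σ(∇·σᵀ)` equals `−ε(b'(x₂), a'(x₁))`; in particular, if `a'` or `b'`
is not identically zero, the structural identity fails at some point. -/
theorem structural_identity_fails_separable
    (ε a₀ b₀ δ : ℝ) (hε : ε ≠ 0) (ha₀ : 0 < a₀) (hb₀ : 0 < b₀) (hδ : 0 < δ)
    (a b : ℝ → ℝ) (ha : ContDiff ℝ 1 a) (hb : ContDiff ℝ 1 b)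
    (haa : ∀ s, a₀ ≤ a s) (hbb : ∀ s, b₀ ≤ b s)
    (hdet : ∀ x : Fin 2 → ℝ, δ ≤ a (x 0) * b (x 1) - ε^2)
    (σ D : (Fin 2 → ℝ) → Matrix (Fin 2) (Fin 2) ℝ)
    (hσ : ∀ x, σ x = !![a (x 0), ε; ε, b (x 1)])
    (hD : ∀ x, D x = σ x * (σ x)ᵀ) :
    (∀ (x : Fin 2 → ℝ),
      (∑ j : Fin 2, fderiv ℝ (fun y => D y 0 j) x (Pi.single j 1))
          - 2 * (∑ l : Fin 2, σ x 0 l *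
              (∑ j : Fin 2, fderiv ℝ (fun y => σ y j l) x (Pi.single j 1)))
        = -ε * deriv b (x 1) ∧
      (∑ j : Fin 2, fderiv ℝ (fun y => D y 1 j) x (Pi.single j 1))
          - 2 * (∑ l : Fin 2, σ x 1 l *
              (∑ j : Fin 2, fderiv ℝ (fun y => σ y j l) x (Pi.single j 1)))
        = -ε * deriv a (x 0)) ∧
    ((∃ s, deriv a s ≠ 0) ∨ (∃ s, deriv b s ≠ 0) →
      ∃ (x : Fin 2 → ℝ) (i : Fin 2),
        (∑ j : Fin 2, fderiv ℝ (fun y => D y i j) x (Pi.single j 1))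
          ≠ 2 * (∑ l : Fin 2, σ x i l *
              (∑ j : Fin 2, fderiv ℝ (fun y => σ y j l) x (Pi.single j 1)))) :=
  structural_identity_fails_separable_general ε hε a b ha hb σ D hσ hD
end
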